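/- Let g, k, m, N ≥ 1 be integers and let φ be a Jacobi form of degree g, weight k, and index m. Then the restriction to N-torsion points φ[N], defined by φ[N](τ) := ((φ|_{k,m}[I_g,(α,β),0])(τ,0)) indexed by α, β ∈ (1/N)ℤ^g / Nℤ^g, is a well-defined vector-valued Siegel modular form of degree g and weight k of type ρ_[N]; that is, it is independent of the choice of representatives of α and β, and for every M ∈ Sp_g(ℤ) one has φ[N]((AZ+B)(CZ+D)^{-1}) = ρ_[N](M) det(CZ+D)^k φ[N](Z). -/

import Mathlib

open Matrix Complex

noncomputable section

attribute [local instance] Matrix.frobeniusNormedAddCommGroup Matrix.frobeniusNormedSpace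

/-- The Siegel upper half space: symmetric complex matrices with positive definite
imaginary part. -/
def SiegelUpperHalfSpace (g : ℕ) : Set (Matrix (Fin g) (Fin g) ℂ) :=
  {Z | Z.IsSymm ∧ (Matrix.of fun i j => (Z i j).im).PosDef}

/-- Complex block entries of an integral symplectic matrix. -/
def blkA {g : ℕ} (M : Matrix (Fin g ⊕ Fin g) (Fin g ⊕ Fin g) ℤ) :
    Matrix (Fin g) (Fin g) ℂ := (M.map (Int.cast : ℤ → ℂ)).toBlocks₁₁
def blkB {g : ℕ} (M : Matrix (Fin g ⊕ Fin g) (Fin g ⊕ Fin g) ℤ) :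
    Matrix (Fin g) (Fin g) ℂ := (M.map (Int.cast : ℤ → ℂ)).toBlocks₁₂
def blkC {g : ℕ} (M : Matrix (Fin g ⊕ Fin g) (Fin g ⊕ Fin g) ℤ) :
    Matrix (Fin g) (Fin g) ℂ := (M.map (Int.cast : ℤ → ℂ)).toBlocks₂₁
def blkD {g : ℕ} (M : Matrix (Fin g ⊕ Fin g) (Fin g ⊕ Fin g) ℤ) :
    Matrix (Fin g) (Fin g) ℂ := (M.map (Int.cast : ℤ → ℂ)).toBlocks₂₂

/-- A (scalar-valued, classical) Siegel modular form of degree `g` and weight `k`: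
holomorphic on the Siegel upper half space and satisfying the modular transformation law
for the full integral symplectic group. -/
def IsSiegelModularForm (g k : ℕ) (F : Matrix (Fin g) (Fin g) ℂ → ℂ) : Prop :=
  DifferentiableOn ℂ F (SiegelUpperHalfSpace g) ∧
  ∀ M ∈ Matrix.symplecticGroup (Fin g) ℤ, ∀ Z ∈ SiegelUpperHalfSpace g,
    F ((blkA M * Z + blkB M) * (blkC M * Z + blkD M)⁻¹)
      = (blkC M * Z + blkD M).det ^ k * F Z

/-- A rational square matrix is half-integral if its diagonal entries are integers and
its off-diagonal entries are half-integers (i.e. twice the matrix is integral). -/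
def IsHalfIntegral {g : ℕ} (T : Matrix (Fin g) (Fin g) ℚ) : Prop :=
  (∀ i, (T i i).den = 1) ∧ ∀ i j, (2 * T i j).den = 1

/-- Fourier indices of (scalar) Siegel modular forms: symmetric, positive semi-definite,
half-integral matrices. -/
def SiegelIndexSet (g : ℕ) : Set (Matrix (Fin g) (Fin g) ℚ) :=
  {T | T.IsSymm ∧ (T.map ((↑) : ℚ → ℝ)).PosSemidef ∧ IsHalfIntegral T}

/-- `F` has the Fourier expansion `F(Z) = Σ_T c(T) e^{2 π i tr (T Z)}`, the sum running over
symmetric positive semi-definite half-integral matrices `T`. -/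
def HasFourierExpansion (g : ℕ) (F : Matrix (Fin g) (Fin g) ℂ → ℂ)
    (c : Matrix (Fin g) (Fin g) ℚ → ℂ) : Prop :=
  (∀ T ∉ SiegelIndexSet g, c T = 0) ∧
  ∀ Z ∈ SiegelUpperHalfSpace g,
    HasSum (fun T : Matrix (Fin g) (Fin g) ℚ =>
      c T * Complex.exp (2 * Real.pi * Complex.I * ((T.map ((↑) : ℚ → ℂ)) * Z).trace)) (F Z)

/-- The Jacobi slash operator `φ |_{k,m} [(A B; C D), (λ, μ), x]` of weight `k` and
index `m`, for row vectors `λ, μ` and `x` a scalar. -/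
def jacobiSlash (g k m : ℕ) (φ : Matrix (Fin g) (Fin g) ℂ → (Fin g → ℂ) → ℂ)
    (A B C D : Matrix (Fin g) (Fin g) ℂ) (lam mu : Fin g → ℂ) (x : ℂ) :
    Matrix (Fin g) (Fin g) ℂ → (Fin g → ℂ) → ℂ :=
  fun τ z =>
    (C * τ + D).det ^ (-(k : ℤ)) *
    Complex.exp ((2 * Real.pi * Complex.I * m) *
      (- (dotProduct
            (Matrix.vecMul (z + Matrix.vecMul lam τ + mu) ((C * τ + D)⁻¹ * C))
            (z + Matrix.vecMul lam τ + mu))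
        + dotProduct (Matrix.vecMul lam τ) lam
        + 2 * dotProduct lam z
        + dotProduct mu lam + x)) *
    φ ((A * τ + B) * (C * τ + D)⁻¹)
      (Matrix.vecMul (z + Matrix.vecMul lam τ + mu) ((C * τ + D)⁻¹))

/-- A Jacobi form of degree `g`, weight `k` and index `m`: a holomorphic function on
`ℍ_g × ℂ^g`, invariant under the Jacobi slash action of `Sp_g(ℤ) ⋉ ℤ^{2g}`. -/
def IsJacobiForm (g k m : ℕ) (φ : Matrix (Fin g) (Fin g) ℂ → (Fin g → ℂ) → ℂ) : Prop :=
  DifferentiableOn ℂ (fun P : Matrix (Fin g) (Fin g) ℂ × (Fin g → ℂ) => φ P.1 P.2)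
    ((SiegelUpperHalfSpace g) ×ˢ (Set.univ : Set (Fin g → ℂ))) ∧
  ∀ M ∈ Matrix.symplecticGroup (Fin g) ℤ, ∀ lam mu : Fin g → ℤ,
    ∀ τ ∈ SiegelUpperHalfSpace g, ∀ z : Fin g → ℂ,
      jacobiSlash g k m φ (blkA M) (blkB M) (blkC M) (blkD M)
        (fun i => (lam i : ℂ)) (fun i => (mu i : ℂ)) 0 τ z = φ τ z

/-- Fourier indices of Jacobi forms of degree `g` and index `m`: pairs `(T, R)` with `T`
symmetric positive semi-definite rational and `4mT - R ᵀR` positive semi-definite. -/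
def JacobiIndexSet (g m : ℕ) : Set (Matrix (Fin g) (Fin g) ℚ × (Fin g → ℚ)) :=
  {TR | TR.1.IsSymm ∧ (TR.1.map ((↑) : ℚ → ℝ)).PosSemidef ∧
    ((((4 * m : ℚ) • TR.1 - Matrix.of fun i j => TR.2 i * TR.2 j).map
      ((↑) : ℚ → ℝ))).PosSemidef}

/-- `φ` has the Fourier expansion `φ(τ,z) = Σ_{T,R} c(T,R) e^{2 π i (tr (T τ) + z R)}`. -/
def HasJacobiFourierExpansion (g m : ℕ) (φ : Matrix (Fin g) (Fin g) ℂ → (Fin g → ℂ) → ℂ)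
    (c : Matrix (Fin g) (Fin g) ℚ → (Fin g → ℚ) → ℂ) : Prop :=
  (∀ T R, (T, R) ∉ JacobiIndexSet g m → c T R = 0) ∧
  ∀ τ ∈ SiegelUpperHalfSpace g, ∀ z : Fin g → ℂ,
    HasSum (fun TR : Matrix (Fin g) (Fin g) ℚ × (Fin g → ℚ) =>
      c TR.1 TR.2 * Complex.exp (2 * Real.pi * Complex.I *
        (((TR.1.map ((↑) : ℚ → ℂ)) * τ).trace
          + dotProduct z (fun i => (TR.2 i : ℂ))))) (φ τ z)

/-- The restriction of a Jacobi form to the torsion point determined by the pair of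
rational row vectors `(α, β)`: `τ ↦ (φ |_{k,m} [I_g, (α, β), 0]) (τ, 0)`. -/
def jacobiRestrict (g k m : ℕ) (φ : Matrix (Fin g) (Fin g) ℂ → (Fin g → ℂ) → ℂ)
    (α β : Fin g → ℚ) (τ : Matrix (Fin g) (Fin g) ℂ) : ℂ :=
  jacobiSlash g k m φ 1 0 0 1 (fun i => (α i : ℂ)) (fun i => (β i : ℂ)) 0 τ 0
namespace JacAux

variable {g : ℕ}

/- ### block algebra of symplectic matrices -/

lemma map_J : (Matrix.J (Fin g) ℤ).map (Int.cast : ℤ → ℂ) = Matrix.J (Fin g) ℂ := by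
  unfold Matrix.J
  ext (i|i) (j|j) <;>
    simp [Matrix.fromBlocks, Matrix.map_apply, Matrix.one_apply, apply_ite (Int.cast : ℤ → ℂ)]

lemma mapC_symplectic {M : Matrix (Fin g ⊕ Fin g) (Fin g ⊕ Fin g) ℤ}
    (hM : M ∈ Matrix.symplecticGroup (Fin g) ℤ) :
    M.map (Int.cast : ℤ → ℂ) ∈ Matrix.symplecticGroup (Fin g) ℂ := by
  rw [SymplecticGroup.mem_iff] at hM ⊢
  have : ((M * Matrix.J (Fin g) ℤ * Mᵀ).map (Int.cast : ℤ → ℂ))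
      = M.map (Int.cast : ℤ → ℂ) * Matrix.J (Fin g) ℂ * (M.map (Int.cast : ℤ → ℂ))ᵀ := by
    rw [show (Int.cast : ℤ → ℂ) = ⇑(Int.castRingHom ℂ) from rfl, Matrix.map_mul, Matrix.map_mul,
      Matrix.transpose_map]
    congr 2
    exact map_J
  rw [← this, hM, map_J]

lemma rel_of_mem {A B C D : Matrix (Fin g) (Fin g) ℂ}
    (h : Matrix.fromBlocks A B C D ∈ Matrix.symplecticGroup (Fin g) ℂ) :
    A * Bᵀ = B * Aᵀ ∧ A * Dᵀ - B * Cᵀ = 1 ∧ C * Dᵀ = D * Cᵀ := by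
  rw [SymplecticGroup.mem_iff] at h
  rw [Matrix.J, Matrix.fromBlocks_multiply, Matrix.fromBlocks_transpose,
    Matrix.fromBlocks_multiply] at h
  simp only [Matrix.mul_zero, Matrix.mul_neg, Matrix.mul_one, zero_add, add_zero,
    Matrix.neg_mul, Matrix.zero_mul] at h
  rw [Matrix.fromBlocks_inj] at h
  obtain ⟨h1, h2, h3, h4⟩ := h
  refine ⟨(add_neg_eq_zero.mp h1).symm, ?_, (add_neg_eq_zero.mp h4).symm⟩
  have e : A * Dᵀ - B * Cᵀ = -(B * Cᵀ + -(A * Dᵀ)) := by abel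
  rw [e, h2, neg_neg]

lemma blkA_transpose (M : Matrix (Fin g ⊕ Fin g) (Fin g ⊕ Fin g) ℤ) :
    blkA Mᵀ = (blkA M)ᵀ := rfl
lemma blkB_transpose (M : Matrix (Fin g ⊕ Fin g) (Fin g ⊕ Fin g) ℤ) :
    blkB Mᵀ = (blkC M)ᵀ := rfl
lemma blkC_transpose (M : Matrix (Fin g ⊕ Fin g) (Fin g ⊕ Fin g) ℤ) :
    blkC Mᵀ = (blkB M)ᵀ := rfl
lemma blkD_transpose (M : Matrix (Fin g ⊕ Fin g) (Fin g ⊕ Fin g) ℤ) :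
    blkD Mᵀ = (blkD M)ᵀ := rfl

lemma fromBlocks_blk (M : Matrix (Fin g ⊕ Fin g) (Fin g ⊕ Fin g) ℤ) :
    Matrix.fromBlocks (blkA M) (blkB M) (blkC M) (blkD M) = M.map (Int.cast : ℤ → ℂ) :=
  Matrix.fromBlocks_toBlocks _

lemma sympl_rels {M : Matrix (Fin g ⊕ Fin g) (Fin g ⊕ Fin g) ℤ}
    (hM : M ∈ Matrix.symplecticGroup (Fin g) ℤ) :
    blkA M * (blkD M)ᵀ - blkB M * (blkC M)ᵀ = 1 ∧
    blkC M * (blkD M)ᵀ = blkD M * (blkC M)ᵀ ∧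
    blkD M * (blkA M)ᵀ - blkC M * (blkB M)ᵀ = 1 ∧
    (blkA M)ᵀ * blkC M = (blkC M)ᵀ * blkA M ∧
    (blkB M)ᵀ * blkD M = (blkD M)ᵀ * blkB M ∧
    (blkA M)ᵀ * blkD M - (blkC M)ᵀ * blkB M = 1 := by
  have h1 := rel_of_mem (by rw [fromBlocks_blk]; exact mapC_symplectic hM)
  have h2 := rel_of_mem (g := g) (A := blkA Mᵀ) (B := blkB Mᵀ) (C := blkC Mᵀ) (D := blkD Mᵀ)
    (by rw [fromBlocks_blk]; exact mapC_symplectic (SymplecticGroup.transpose_mem hM))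
  rw [blkA_transpose, blkB_transpose, blkC_transpose, blkD_transpose] at h2
  simp only [Matrix.transpose_transpose] at h2
  refine ⟨h1.2.1, h1.2.2, ?_, h2.1, h2.2.2, h2.2.1⟩
  have := congrArg Matrix.transpose h1.2.1
  simpa [Matrix.transpose_sub, Matrix.transpose_mul, Matrix.transpose_one] using this

/- ### dot-product calculus -/

lemma dot_swap (τ : Matrix (Fin g) (Fin g) ℂ) (hτ : τᵀ = τ) (a b : Fin g → ℂ) :
    (a ᵥ* τ) ⬝ᵥ b = (b ᵥ* τ) ⬝ᵥ a := by
  have h : τ *ᵥ b = b ᵥ* τ := by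
    conv_lhs => rw [← hτ]
    exact Matrix.mulVec_transpose τ b
  rw [← Matrix.dotProduct_mulVec, h, dotProduct_comm]

lemma dot_vecMul_vecMul (a b : Fin g → ℂ) (X Y : Matrix (Fin g) (Fin g) ℂ) :
    (a ᵥ* X) ⬝ᵥ (b ᵥ* Y) = (a ᵥ* (X * Yᵀ)) ⬝ᵥ b := by
  calc (a ᵥ* X) ⬝ᵥ (b ᵥ* Y) = (b ᵥ* Y) ⬝ᵥ (a ᵥ* X) := dotProduct_comm _ _
    _ = b ⬝ᵥ (Y *ᵥ (a ᵥ* X)) := by rw [Matrix.dotProduct_mulVec]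
    _ = b ⬝ᵥ ((a ᵥ* X) ᵥ* Yᵀ) := by rw [Matrix.vecMul_transpose]
    _ = ((a ᵥ* X) ᵥ* Yᵀ) ⬝ᵥ b := dotProduct_comm _ _
    _ = (a ᵥ* (X * Yᵀ)) ⬝ᵥ b := by rw [Matrix.vecMul_vecMul]

/- ### nonvanishing of det (C Z + D) -/

lemma posdef_complex (Y : Matrix (Fin g) (Fin g) ℝ) (hY : Y.PosDef) (v : Fin g → ℂ)
    (hv : v ≠ 0) :
    0 < (v ⬝ᵥ ((Y.map ((↑) : ℝ → ℂ)) *ᵥ (star v))).re := by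
  set x : Fin g → ℝ := fun i => (v i).re with hx
  set y : Fin g → ℝ := fun i => (v i).im with hy
  have hre : (v ⬝ᵥ ((Y.map ((↑) : ℝ → ℂ)) *ᵥ (star v))).re
      = x ⬝ᵥ (Y *ᵥ x) + y ⬝ᵥ (Y *ᵥ y) := by
    simp only [dotProduct, Matrix.mulVec, Matrix.map_apply, Pi.star_apply,
      Finset.mul_sum]
    rw [Complex.re_sum, ← Finset.sum_add_distrib]
    refine Finset.sum_congr rfl fun i _ => ?_
    rw [Complex.re_sum, ← Finset.sum_add_distrib]
    refine Finset.sum_congr rfl fun j _ => ?_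
    simp only [RCLike.star_def, Complex.mul_re, Complex.mul_im, Complex.conj_re,
      Complex.conj_im, Complex.ofReal_re, Complex.ofReal_im]
    ring
  rw [hre]
  have hxy : x ≠ 0 ∨ y ≠ 0 := by
    by_contra h
    push_neg at h
    apply hv
    funext i
    have h1 : x i = 0 := by rw [h.1]; rfl
    have h2 : y i = 0 := by rw [h.2]; rfl
    exact Complex.ext h1 h2
  have hsd := hY.posSemidef
  rcases hxy with h | h
  · have h1 := hY.dotProduct_mulVec_pos h
    have h2 := hsd.dotProduct_mulVec_nonneg y
    simp only [star_trivial] at h1 h2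
    linarith
  · have h1 := hY.dotProduct_mulVec_pos h
    have h2 := hsd.dotProduct_mulVec_nonneg x
    simp only [star_trivial] at h1 h2
    linarith

lemma det_ne_zero (A B C D : Matrix (Fin g) (Fin g) ℂ)
    (hAC : Aᵀ * C = Cᵀ * A) (hBD : Bᵀ * D = Dᵀ * B) (hAD : Aᵀ * D - Cᵀ * B = 1)
    (hCre : C.map (starRingEnd ℂ) = C) (hDre : D.map (starRingEnd ℂ) = D)
    (Z : Matrix (Fin g) (Fin g) ℂ) (hZ : Z ∈ SiegelUpperHalfSpace g) :
    (C * Z + D).det ≠ 0 := by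
  intro hdet
  obtain ⟨v, hv, hv0⟩ := Matrix.exists_mulVec_eq_zero_iff.mpr hdet
  set Zc : Matrix (Fin g) (Fin g) ℂ := Z.map (starRingEnd ℂ) with hZc
  have hconj : (C * Zc + D) *ᵥ (star v) = 0 := by
    have : (C * Zc + D) = ((C * Z + D).map (starRingEnd ℂ)) := by
      rw [show ((C * Z + D).map (starRingEnd ℂ))
          = C.map (starRingEnd ℂ) * Z.map (starRingEnd ℂ) + D.map (starRingEnd ℂ) by
        rw [Matrix.map_add _ (map_add (starRingEnd ℂ)) _ _, Matrix.map_mul]]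
      rw [hCre, hDre]
    rw [this]
    funext i
    have := congrFun hv0 i
    simp only [Matrix.mulVec, dotProduct, Matrix.map_apply, Pi.star_apply,
      Pi.zero_apply] at this ⊢
    rw [← map_zero (starRingEnd ℂ), ← this, map_sum]
    simp [_root_.map_mul]
  have hZs : Zᵀ = Z := hZ.1
  have key : (A * Z + B)ᵀ * (C * Zc + D) - (C * Z + D)ᵀ * (A * Zc + B) = Z - Zc := by
    have e1 : (A * Z + B)ᵀ = Z * Aᵀ + Bᵀ := by
      rw [Matrix.transpose_add, Matrix.transpose_mul, hZs]
    have e2 : (C * Z + D)ᵀ = Z * Cᵀ + Dᵀ := by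
      rw [Matrix.transpose_add, Matrix.transpose_mul, hZs]
    rw [e1, e2]
    have expand : (Z * Aᵀ + Bᵀ) * (C * Zc + D) - (Z * Cᵀ + Dᵀ) * (A * Zc + B)
        = Z * (Aᵀ * C - Cᵀ * A) * Zc + Z * (Aᵀ * D - Cᵀ * B)
          + (Bᵀ * C - Dᵀ * A) * Zc + (Bᵀ * D - Dᵀ * B) := by
      noncomm_ring
    rw [expand, hAD, hBD]
    have hDA : Bᵀ * C - Dᵀ * A = -1 := by
      have := congrArg Matrix.transpose hAD
      simp only [Matrix.transpose_sub, Matrix.transpose_mul, Matrix.transpose_transpose,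
        Matrix.transpose_one] at this
      rw [← neg_sub (Dᵀ * A) (Bᵀ * C), this]
    rw [hAC, hDA]
    simp only [sub_self, Matrix.zero_mul, Matrix.mul_zero, zero_add, sub_eq_add_neg]
    noncomm_ring
  have hzero : v ⬝ᵥ ((Z - Zc) *ᵥ (star v)) = 0 := by
    rw [← key, Matrix.sub_mulVec]
    have t1 : ((A * Z + B)ᵀ * (C * Zc + D)) *ᵥ (star v) = 0 := by
      rw [← Matrix.mulVec_mulVec, hconj, Matrix.mulVec_zero]
    have t2 : v ⬝ᵥ (((C * Z + D)ᵀ * (A * Zc + B)) *ᵥ (star v)) = 0 := by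
      rw [← Matrix.mulVec_mulVec, Matrix.dotProduct_mulVec, ← Matrix.mulVec_transpose,
        Matrix.transpose_transpose, hv0]
      simp
    rw [dotProduct_sub, t1, t2]
    simp
  have hYdecomp : Z - Zc
      = (2 * Complex.I) • ((Matrix.of fun i j => (Z i j).im).map ((↑) : ℝ → ℂ)) := by
    ext i j
    simp only [Matrix.sub_apply, hZc, Matrix.map_apply, Matrix.smul_apply, Matrix.of_apply,
      smul_eq_mul]
    rw [Complex.sub_conj]
    push_cast
    ring
  rw [hYdecomp, Matrix.smul_mulVec, dotProduct_smul] at hzero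
  have hpos := posdef_complex (Matrix.of fun i j => (Z i j).im) hZ.2 v hv
  have hz2 : (v ⬝ᵥ ((Matrix.of fun i j => (Z i j).im).map ((↑) : ℝ → ℂ)) *ᵥ (star v)) = 0 := by
    have h2i : (2 * Complex.I : ℂ) ≠ 0 := by simp [Complex.I_ne_zero]
    exact (smul_eq_zero.mp hzero).resolve_left h2i
  rw [hz2] at hpos
  simp at hpos

end JacAux

namespace JacAux

variable {g : ℕ}

/- ### identity blocks -/

lemma blkA_one : blkA (1 : Matrix (Fin g ⊕ Fin g) (Fin g ⊕ Fin g) ℤ) = 1 := by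
  rw [show (1 : Matrix (Fin g ⊕ Fin g) (Fin g ⊕ Fin g) ℤ) = Matrix.fromBlocks 1 0 0 1 from
    Matrix.fromBlocks_one.symm]
  ext i j
  simp [blkA, Matrix.toBlocks₁₁, Matrix.map_apply, Matrix.fromBlocks, Matrix.one_apply,
    apply_ite (Int.cast : ℤ → ℂ)]

lemma blkB_one : blkB (1 : Matrix (Fin g ⊕ Fin g) (Fin g ⊕ Fin g) ℤ) = 0 := by
  rw [show (1 : Matrix (Fin g ⊕ Fin g) (Fin g ⊕ Fin g) ℤ) = Matrix.fromBlocks 1 0 0 1 from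
    Matrix.fromBlocks_one.symm]
  ext i j
  simp [blkB, Matrix.toBlocks₁₂, Matrix.map_apply, Matrix.fromBlocks]

lemma blkC_one : blkC (1 : Matrix (Fin g ⊕ Fin g) (Fin g ⊕ Fin g) ℤ) = 0 := by
  rw [show (1 : Matrix (Fin g ⊕ Fin g) (Fin g ⊕ Fin g) ℤ) = Matrix.fromBlocks 1 0 0 1 from
    Matrix.fromBlocks_one.symm]
  ext i j
  simp [blkC, Matrix.toBlocks₂₁, Matrix.map_apply, Matrix.fromBlocks]

lemma blkD_one : blkD (1 : Matrix (Fin g ⊕ Fin g) (Fin g ⊕ Fin g) ℤ) = 1 := by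
  rw [show (1 : Matrix (Fin g ⊕ Fin g) (Fin g ⊕ Fin g) ℤ) = Matrix.fromBlocks 1 0 0 1 from
    Matrix.fromBlocks_one.symm]
  ext i j
  simp [blkD, Matrix.toBlocks₂₂, Matrix.map_apply, Matrix.fromBlocks, Matrix.one_apply,
    apply_ite (Int.cast : ℤ → ℂ)]

/- ### explicit form of the restriction -/

lemma jacobiRestrict_eq (k m : ℕ) (φ : Matrix (Fin g) (Fin g) ℂ → (Fin g → ℂ) → ℂ)
    (α β : Fin g → ℚ) (τ : Matrix (Fin g) (Fin g) ℂ) :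
    jacobiRestrict g k m φ α β τ
      = Complex.exp ((2 * (Real.pi : ℂ) * Complex.I * (m : ℂ)) *
          ((Matrix.vecMul (fun i => (α i : ℂ)) τ ⬝ᵥ fun i => (α i : ℂ))
            + ((fun i => (β i : ℂ)) ⬝ᵥ fun i => (α i : ℂ))))
        * φ τ (Matrix.vecMul (fun i => (α i : ℂ)) τ + fun i => (β i : ℂ)) := by
  unfold jacobiRestrict jacobiSlash
  simp only [Matrix.zero_mul, zero_add, Matrix.one_mul, add_zero, Matrix.det_one, _root_.one_zpow,
    inv_one, Matrix.mul_zero, Matrix.vecMul_zero, zero_dotProduct, neg_zero,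
    dotProduct_zero, mul_zero, Matrix.vecMul_one, Matrix.mul_one, one_mul]

/- ### slash identities specialised -/

lemma slash_one (k m : ℕ) (φ : Matrix (Fin g) (Fin g) ℂ → (Fin g → ℂ) → ℂ)
    (hφ : IsJacobiForm g k m φ) (lam mu : Fin g → ℤ) {τ : Matrix (Fin g) (Fin g) ℂ}
    (hτ : τ ∈ SiegelUpperHalfSpace g) (z : Fin g → ℂ) :
    Complex.exp ((2 * (Real.pi : ℂ) * Complex.I * (m : ℂ)) *
        ((Matrix.vecMul (fun i => (lam i : ℂ)) τ ⬝ᵥ fun i => (lam i : ℂ))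
          + 2 * ((fun i => (lam i : ℂ)) ⬝ᵥ z)
          + ((fun i => (mu i : ℂ)) ⬝ᵥ fun i => (lam i : ℂ))))
      * φ τ (z + Matrix.vecMul (fun i => (lam i : ℂ)) τ + fun i => (mu i : ℂ)) = φ τ z := by
  have h := hφ.2 1 (Submonoid.one_mem _) lam mu τ hτ z
  rw [blkA_one, blkB_one, blkC_one, blkD_one] at h
  unfold jacobiSlash at h
  simp only [Matrix.zero_mul, zero_add, Matrix.det_one, _root_.one_zpow, inv_one, Matrix.mul_zero,
    Matrix.vecMul_zero, zero_dotProduct, neg_zero, Matrix.one_mul, add_zero,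
    Matrix.mul_one, Matrix.vecMul_one, one_mul] at h
  exact h

lemma slash_M (k m : ℕ) (φ : Matrix (Fin g) (Fin g) ℂ → (Fin g → ℂ) → ℂ)
    (hφ : IsJacobiForm g k m φ) {M : Matrix (Fin g ⊕ Fin g) (Fin g ⊕ Fin g) ℤ}
    (hM : M ∈ Matrix.symplecticGroup (Fin g) ℤ) {Z : Matrix (Fin g) (Fin g) ℂ}
    (hZ : Z ∈ SiegelUpperHalfSpace g) (z : Fin g → ℂ) :
    φ Z z = (blkC M * Z + blkD M).det ^ (-(k : ℤ)) *
      Complex.exp ((2 * (Real.pi : ℂ) * Complex.I * (m : ℂ)) *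
        (-(Matrix.vecMul z ((blkC M * Z + blkD M)⁻¹ * blkC M) ⬝ᵥ z)))
      * φ ((blkA M * Z + blkB M) * (blkC M * Z + blkD M)⁻¹)
          (Matrix.vecMul z ((blkC M * Z + blkD M)⁻¹)) := by
  have h := hφ.2 M hM 0 0 Z hZ z
  have h0 : (fun i => (((0 : Fin g → ℤ) i : ℤ) : ℂ)) = (0 : Fin g → ℂ) := by
    funext i; simp
  simp only [h0] at h
  unfold jacobiSlash at h
  simp only [Matrix.zero_vecMul, add_zero, dotProduct_zero, zero_dotProduct,
    mul_zero, neg_zero, zero_add] at h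
  exact h.symm

/- ### cast bookkeeping -/

lemma cast_pair₁ (α β : Fin g → ℚ) (M : Matrix (Fin g ⊕ Fin g) (Fin g ⊕ Fin g) ℤ) :
    (fun i => (((Matrix.vecMul α ((M.toBlocks₁₁).map ((↑) : ℤ → ℚ))
      + Matrix.vecMul β ((M.toBlocks₂₁).map ((↑) : ℤ → ℚ)))) i : ℂ))
    = Matrix.vecMul (fun i => (α i : ℂ)) (blkA M)
      + Matrix.vecMul (fun i => (β i : ℂ)) (blkC M) := by
  funext i
  simp only [Pi.add_apply, Matrix.vecMul, dotProduct, Matrix.map_apply, blkA, blkC,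
    Matrix.toBlocks₁₁, Matrix.toBlocks₂₁, Matrix.of_apply]
  push_cast
  rfl

lemma cast_pair₂ (α β : Fin g → ℚ) (M : Matrix (Fin g ⊕ Fin g) (Fin g ⊕ Fin g) ℤ) :
    (fun i => (((Matrix.vecMul α ((M.toBlocks₁₂).map ((↑) : ℤ → ℚ))
      + Matrix.vecMul β ((M.toBlocks₂₂).map ((↑) : ℤ → ℚ)))) i : ℂ))
    = Matrix.vecMul (fun i => (α i : ℂ)) (blkB M)
      + Matrix.vecMul (fun i => (β i : ℂ)) (blkD M) := by
  funext i
  simp only [Pi.add_apply, Matrix.vecMul, dotProduct, Matrix.map_apply, blkB, blkD,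
    Matrix.toBlocks₁₂, Matrix.toBlocks₂₂, Matrix.of_apply]
  push_cast
  rfl

lemma exp_eq_of_sub_int {x y : ℂ} (n : ℤ) (h : x - y = (n : ℂ) * (2 * (Real.pi : ℂ) * Complex.I)) :
    Complex.exp x = Complex.exp y := by
  have hx : x = y + (n : ℂ) * (2 * (Real.pi : ℂ) * Complex.I) := by linear_combination h
  rw [hx, Complex.exp_add, Complex.exp_int_mul_two_pi_mul_I, mul_one]

/- ### differentiability -/

lemma smul_vecMul' (c : ℂ) (a : Fin g → ℂ) (X : Matrix (Fin g) (Fin g) ℂ) :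
    a ᵥ* (c • X) = c • (a ᵥ* X) := by
  funext j
  simp only [Matrix.vecMul, dotProduct, Matrix.smul_apply, Pi.smul_apply, smul_eq_mul,
    Finset.mul_sum]
  exact Finset.sum_congr rfl fun i _ => by ring

def qLM (a b : Fin g → ℂ) : Matrix (Fin g) (Fin g) ℂ →ₗ[ℂ] ℂ where
  toFun τ := (a ᵥ* τ) ⬝ᵥ b
  map_add' X Y := by
    show (a ᵥ* (X + Y)) ⬝ᵥ b = (a ᵥ* X) ⬝ᵥ b + (a ᵥ* Y) ⬝ᵥ b
    rw [Matrix.vecMul_add, add_dotProduct]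
  map_smul' c X := by
    show (a ᵥ* (c • X)) ⬝ᵥ b = c • ((a ᵥ* X) ⬝ᵥ b)
    rw [smul_vecMul', smul_dotProduct]

def vecMulLM (a : Fin g → ℂ) : Matrix (Fin g) (Fin g) ℂ →ₗ[ℂ] (Fin g → ℂ) where
  toFun τ := a ᵥ* τ
  map_add' X Y := by
    show a ᵥ* (X + Y) = a ᵥ* X + a ᵥ* Y
    rw [Matrix.vecMul_add]
  map_smul' c X := by
    show a ᵥ* (c • X) = c • (a ᵥ* X)
    rw [smul_vecMul']

end JacAux


namespace JacAux

lemma exp_helper {T a b c : ℂ} (h : a + c = b) :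
    Complex.exp (T * a) = Complex.exp (T * b) * Complex.exp (T * (-c)) := by
  rw [← Complex.exp_add]
  apply congrArg
  linear_combination T * h

lemma final_algebra {d e1 e2 e3 x : ℂ} (hd : d ≠ 0) (h : e1 = e3 * e2) :
    e1 * x = d * (e3 * (d⁻¹ * e2 * x)) := by
  field_simp [h]
  rw [h]
  ring

end JacAux

/-- **Restriction of a Jacobi form to N-torsion points is a vector-valued Siegel modular
form of type `ρ_[N]`** (Lemma of the paper).  For a Jacobi form `φ` of degree `g`,
weight `k` and index `m`, the collection `φ[N] = (τ ↦ (φ|_{k,m}[I_g,(α,β),0])(τ,0))`,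
indexed by `α, β ∈ (1/N)ℤ^g / Nℤ^g`, satisfies:
(1) each component is independent of the choice of representatives `α, β`;
(2) each component is holomorphic on `ℍ_g`;
(3) for every `M = (A B; C D) ∈ Sp_g(ℤ)` the transformation law
    `φ[N]_{α,β}((AZ+B)(CZ+D)⁻¹) = det(CZ+D)^k · φ[N]_{α',β'}(Z)` holds, where
    `(α',β') = (α,β)M`; this is exactly the transformation law
    `φ[N](M·Z) = ρ_[N](M) det(CZ+D)^k φ[N](Z)` for the permutation representation
    `ρ_[N](M⁻¹) 𝔢_{α,β} = 𝔢_{(α,β)M}` written in components. -/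
theorem jacobiRestrict_is_vector_valued_siegel_modular_form
    (g k m N : ℕ) (hg : 1 ≤ g) (hk : 1 ≤ k) (hm : 1 ≤ m) (hN : 1 ≤ N)
    (φ : Matrix (Fin g) (Fin g) ℂ → (Fin g → ℂ) → ℂ)
    (hφ : IsJacobiForm g k m φ) :
    -- (1) well-definedness on `(1/N)ℤ^g / Nℤ^g`
    (∀ α β : Fin g → ℚ, (∀ i, ((N : ℚ) * α i).den = 1) → (∀ i, ((N : ℚ) * β i).den = 1) →
      ∀ a b : Fin g → ℤ, ∀ τ ∈ SiegelUpperHalfSpace g,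
        jacobiRestrict g k m φ (fun i => α i + (N : ℚ) * a i)
            (fun i => β i + (N : ℚ) * b i) τ
          = jacobiRestrict g k m φ α β τ) ∧
    -- (2) holomorphy of every component
    (∀ α β : Fin g → ℚ, (∀ i, ((N : ℚ) * α i).den = 1) → (∀ i, ((N : ℚ) * β i).den = 1) →
      DifferentiableOn ℂ (jacobiRestrict g k m φ α β) (SiegelUpperHalfSpace g)) ∧
    -- (3) vector-valued modular transformation behavior of type `ρ_[N]` and weight `k`
    (∀ α β : Fin g → ℚ, (∀ i, ((N : ℚ) * α i).den = 1) → (∀ i, ((N : ℚ) * β i).den = 1) →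
      ∀ M ∈ Matrix.symplecticGroup (Fin g) ℤ, ∀ Z ∈ SiegelUpperHalfSpace g,
        jacobiRestrict g k m φ α β ((blkA M * Z + blkB M) * (blkC M * Z + blkD M)⁻¹)
          = (blkC M * Z + blkD M).det ^ k *
            jacobiRestrict g k m φ
              (Matrix.vecMul α ((M.toBlocks₁₁).map ((↑) : ℤ → ℚ))
                + Matrix.vecMul β ((M.toBlocks₂₁).map ((↑) : ℤ → ℚ)))
              (Matrix.vecMul α ((M.toBlocks₁₂).map ((↑) : ℤ → ℚ))
                + Matrix.vecMul β ((M.toBlocks₂₂).map ((↑) : ℤ → ℚ))) Z) := by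
  refine ⟨?_, ?_, ?_⟩
  · intro α β hα hβ a b τ hτ
    have hτs : τᵀ = τ := hτ.1
    simp only [JacAux.jacobiRestrict_eq]
    have hcα : (fun i => ((α i + (N : ℚ) * (a i : ℚ) : ℚ) : ℂ)) = (fun i => ((α i) : ℂ)) + (fun i => ((((N : ℤ) * a i) : ℤ) : ℂ)) := by
      funext i
      simp only [Pi.add_apply]
      push_cast
      ring
    have hcβ : (fun i => ((β i + (N : ℚ) * (b i : ℚ) : ℚ) : ℂ)) = (fun i => ((β i) : ℂ)) + (fun i => ((((N : ℤ) * b i) : ℤ) : ℂ)) := by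
      funext i
      simp only [Pi.add_apply]
      push_cast
      ring
    rw [hcα, hcβ]
    have hs := JacAux.slash_one k m φ hφ (fun i => (N : ℤ) * a i) (fun i => (N : ℤ) * b i) hτ
        (Matrix.vecMul (fun i => ((α i) : ℂ)) τ + (fun i => ((β i) : ℂ)))
    beta_reduce at hs
    have harg : Matrix.vecMul ((fun i => ((α i) : ℂ)) + (fun i => ((((N : ℤ) * a i) : ℤ) : ℂ))) τ + ((fun i => ((β i) : ℂ)) + (fun i => ((((N : ℤ) * b i) : ℤ) : ℂ)))
        = (Matrix.vecMul (fun i => ((α i) : ℂ)) τ + (fun i => ((β i) : ℂ))) + Matrix.vecMul (fun i => ((((N : ℤ) * a i) : ℤ) : ℂ)) τ + (fun i => ((((N : ℤ) * b i) : ℤ) : ℂ)) := by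
      rw [Matrix.add_vecMul]
      abel
    rw [harg]
    have hφeq : φ τ ((Matrix.vecMul (fun i => ((α i) : ℂ)) τ + (fun i => ((β i) : ℂ))) + Matrix.vecMul (fun i => ((((N : ℤ) * a i) : ℤ) : ℂ)) τ + (fun i => ((((N : ℤ) * b i) : ℤ) : ℂ)))
        = Complex.exp (-((2 * (Real.pi : ℂ) * Complex.I * (m : ℂ)) *
            ((Matrix.vecMul (fun i => ((((N : ℤ) * a i) : ℤ) : ℂ)) τ ⬝ᵥ (fun i => ((((N : ℤ) * a i) : ℤ) : ℂ))) + 2 * ((fun i => ((((N : ℤ) * a i) : ℤ) : ℂ)) ⬝ᵥ (Matrix.vecMul (fun i => ((α i) : ℂ)) τ + (fun i => ((β i) : ℂ))))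
              + ((fun i => ((((N : ℤ) * b i) : ℤ) : ℂ)) ⬝ᵥ (fun i => ((((N : ℤ) * a i) : ℤ) : ℂ))))))
          * φ τ (Matrix.vecMul (fun i => ((α i) : ℂ)) τ + (fun i => ((β i) : ℂ))) := by
      rw [← hs, ← mul_assoc, ← Complex.exp_add, neg_add_cancel, Complex.exp_zero, one_mul]
    rw [hφeq, ← mul_assoc, ← Complex.exp_add]
    congr 1
    apply JacAux.exp_eq_of_sub_int
        ((m : ℤ) * ((∑ i, b i * ((N : ℚ) * α i).num) - ∑ i, a i * ((N : ℚ) * β i).num))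
    have hMuu : (fun i => ((((N : ℤ) * b i) : ℤ) : ℂ)) ⬝ᵥ (fun i => ((α i) : ℂ)) = ∑ i, (b i : ℂ) * ((((N : ℚ) * α i).num : ℤ) : ℂ) := by
      simp only [dotProduct]
      refine Finset.sum_congr rfl fun i _ => ?_
      have h1 : ((((N : ℚ) * α i).num : ℤ) : ℚ) = (N : ℚ) * α i := by
        have h := Rat.num_div_den ((N : ℚ) * α i)
        rw [hα i] at h
        simpa using h
      have h2 : ((((N : ℚ) * α i).num : ℤ) : ℂ) = (N : ℂ) * (α i : ℂ) := by
        exact_mod_cast congrArg (fun q : ℚ => (q : ℂ)) h1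
      rw [h2]
      push_cast
      ring
    have hLv : (fun i => ((((N : ℤ) * a i) : ℤ) : ℂ)) ⬝ᵥ (fun i => ((β i) : ℂ)) = ∑ i, (a i : ℂ) * ((((N : ℚ) * β i).num : ℤ) : ℂ) := by
      simp only [dotProduct]
      refine Finset.sum_congr rfl fun i _ => ?_
      have h1 : ((((N : ℚ) * β i).num : ℤ) : ℚ) = (N : ℚ) * β i := by
        have h := Rat.num_div_den ((N : ℚ) * β i)
        rw [hβ i] at h
        simpa using h
      have h2 : ((((N : ℚ) * β i).num : ℤ) : ℂ) = (N : ℂ) * (β i : ℂ) := by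
        exact_mod_cast congrArg (fun q : ℚ => (q : ℂ)) h1
      rw [h2]
      push_cast
      ring
    simp only [Matrix.add_vecMul, add_dotProduct, dotProduct_add]
    rw [JacAux.dot_swap τ hτs (fun i => ((((N : ℤ) * a i) : ℤ) : ℂ)) (fun i => ((α i) : ℂ)), dotProduct_comm (fun i => ((((N : ℤ) * a i) : ℤ) : ℂ)) (Matrix.vecMul (fun i => ((α i) : ℂ)) τ),
      dotProduct_comm (fun i => ((β i) : ℂ)) (fun i => ((((N : ℤ) * a i) : ℤ) : ℂ)), hMuu, hLv]
    push_cast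
    ring
  · intro α β hα hβ
    have heq : jacobiRestrict g k m φ α β = fun τ =>
        Complex.exp ((2 * (Real.pi : ℂ) * Complex.I * (m : ℂ)) *
            ((Matrix.vecMul (fun i => (α i : ℂ)) τ ⬝ᵥ fun i => (α i : ℂ))
              + ((fun i => (β i : ℂ)) ⬝ᵥ fun i => (α i : ℂ))))
          * φ τ (Matrix.vecMul (fun i => (α i : ℂ)) τ + fun i => (β i : ℂ)) :=
      funext (JacAux.jacobiRestrict_eq k m φ α β)
    rw [heq]
    have hq : Differentiable ℂ (fun τ : Matrix (Fin g) (Fin g) ℂ =>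
        Matrix.vecMul (fun i => (α i : ℂ)) τ ⬝ᵥ fun i => (α i : ℂ)) :=
      (LinearMap.toContinuousLinearMap
        (JacAux.qLM (fun i => (α i : ℂ)) (fun i => (α i : ℂ)))).differentiable
    have hv : Differentiable ℂ (fun τ : Matrix (Fin g) (Fin g) ℂ =>
        Matrix.vecMul (fun i => (α i : ℂ)) τ) :=
      (LinearMap.toContinuousLinearMap
        (JacAux.vecMulLM (fun i => (α i : ℂ)))).differentiable
    apply DifferentiableOn.mul
    · exact (((hq.add_const _).const_mul _).cexp).differentiableOn
    · have hpair : Differentiable ℂ (fun τ : Matrix (Fin g) (Fin g) ℂ =>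
          (τ, Matrix.vecMul (fun i => (α i : ℂ)) τ + fun i => (β i : ℂ))) :=
        differentiable_id.prodMk (hv.add_const _)
      exact hφ.1.comp hpair.differentiableOn
        (fun τ hτ => Set.mk_mem_prod hτ (Set.mem_univ _))
  · intro α β hα hβ M hM Z hZ
    obtain ⟨hADt, hCD, hDA, hAC, hBD, hAD⟩ := JacAux.sympl_rels hM
    have hZs : Zᵀ = Z := hZ.1
    have hCre : (blkC M).map (starRingEnd ℂ) = blkC M := by
      ext i j
      simp only [Matrix.map_apply, blkC, Matrix.toBlocks₂₁, Matrix.of_apply]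
      exact map_intCast (starRingEnd ℂ) _
    have hDre : (blkD M).map (starRingEnd ℂ) = blkD M := by
      ext i j
      simp only [Matrix.map_apply, blkD, Matrix.toBlocks₂₂, Matrix.of_apply]
      exact map_intCast (starRingEnd ℂ) _
    have hdet := JacAux.det_ne_zero (blkA M) (blkB M) (blkC M) (blkD M) hAC hBD hAD hCre hDre Z hZ
    have hPP : ((blkC M) * Z + (blkD M)) * ((blkC M) * Z + (blkD M))⁻¹ = 1 := Matrix.mul_nonsing_inv _ (isUnit_iff_ne_zero.mpr hdet)
    have hPP' : ((blkC M) * Z + (blkD M))⁻¹ * ((blkC M) * Z + (blkD M)) = 1 := Matrix.nonsing_inv_mul _ (isUnit_iff_ne_zero.mpr hdet)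
    simp only [JacAux.jacobiRestrict_eq, JacAux.cast_pair₁, JacAux.cast_pair₂]
    have hy : Matrix.vecMul (Matrix.vecMul (fun i => ((α i) : ℂ)) (blkA M) + Matrix.vecMul (fun i => ((β i) : ℂ)) (blkC M)) Z + (Matrix.vecMul (fun i => ((α i) : ℂ)) (blkB M) + Matrix.vecMul (fun i => ((β i) : ℂ)) (blkD M)) = (Matrix.vecMul (fun i => ((α i) : ℂ)) ((blkA M) * Z + (blkB M)) + Matrix.vecMul (fun i => ((β i) : ℂ)) ((blkC M) * Z + (blkD M))) := by
      rw [Matrix.add_vecMul, Matrix.vecMul_vecMul, Matrix.vecMul_vecMul,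
        Matrix.vecMul_add, Matrix.vecMul_add]
      abel
    rw [hy]
    have hyP : Matrix.vecMul (Matrix.vecMul (fun i => ((α i) : ℂ)) ((blkA M) * Z + (blkB M)) + Matrix.vecMul (fun i => ((β i) : ℂ)) ((blkC M) * Z + (blkD M))) ((blkC M) * Z + (blkD M))⁻¹ = Matrix.vecMul (fun i => ((α i) : ℂ)) (((blkA M) * Z + (blkB M)) * ((blkC M) * Z + (blkD M))⁻¹) + (fun i => ((β i) : ℂ)) := by
      rw [Matrix.add_vecMul, Matrix.vecMul_vecMul, Matrix.vecMul_vecMul, hPP, Matrix.vecMul_one]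
    have hslash := JacAux.slash_M k m φ hφ hM hZ (Matrix.vecMul (fun i => ((α i) : ℂ)) ((blkA M) * Z + (blkB M)) + Matrix.vecMul (fun i => ((β i) : ℂ)) ((blkC M) * Z + (blkD M)))
    rw [hyP] at hslash
    rw [hslash]
    have hdk : ((blkC M) * Z + (blkD M)).det ^ (-(k : ℤ)) = (((blkC M) * Z + (blkD M)).det ^ k)⁻¹ := by rw [_root_.zpow_neg, zpow_natCast]
    rw [hdk]
    have hdkne : (((blkC M) * Z + (blkD M)).det ^ k) ≠ 0 := pow_ne_zero _ hdet
    have hWP : (((blkA M) * Z + (blkB M)) * ((blkC M) * Z + (blkD M))⁻¹) * ((blkC M) * Z + (blkD M)) = ((blkA M) * Z + (blkB M)) := by rw [mul_assoc, hPP', mul_one]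
    have hPt : ((blkC M) * Z + (blkD M))ᵀ = Z * (blkC M)ᵀ + (blkD M)ᵀ := by
      rw [Matrix.transpose_add, Matrix.transpose_mul, hZs]
    have hSt : ((blkA M) * Z + (blkB M))ᵀ = Z * (blkA M)ᵀ + (blkB M)ᵀ := by
      rw [Matrix.transpose_add, Matrix.transpose_mul, hZs]
    have hq4 : (blkC M) * ((blkC M) * Z + (blkD M))ᵀ = (blkC M) * Z * (blkC M)ᵀ + (blkD M) * (blkC M)ᵀ := by
      rw [hPt, mul_add, ← mul_assoc, hCD]
    have hPC : (blkC M) * ((blkC M) * Z + (blkD M))ᵀ = ((blkC M) * Z + (blkD M)) * (blkC M)ᵀ := by rw [hq4, add_mul]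
    have hq2 : (((blkA M) * Z + (blkB M)) * ((blkC M) * Z + (blkD M))⁻¹) * (blkC M) * ((blkC M) * Z + (blkD M))ᵀ = (blkA M) * Z * (blkC M)ᵀ + (blkB M) * (blkC M)ᵀ := by
      rw [mul_assoc (((blkA M) * Z + (blkB M)) * ((blkC M) * Z + (blkD M))⁻¹) (blkC M) _, hPC, ← mul_assoc, hWP, add_mul]
    have hCB : (blkC M) * (blkB M)ᵀ = (blkD M) * (blkA M)ᵀ - 1 := by rw [← hDA]; abel
    have hq3 : (blkC M) * ((blkA M) * Z + (blkB M))ᵀ = (blkC M) * Z * (blkA M)ᵀ + ((blkD M) * (blkA M)ᵀ - 1) := by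
      rw [hSt, mul_add, ← mul_assoc, hCB]
    have hq1 : (((blkA M) * Z + (blkB M)) * ((blkC M) * Z + (blkD M))⁻¹) * (blkC M) * ((blkA M) * Z + (blkB M))ᵀ = (blkA M) * Z * (blkA M)ᵀ + (blkB M) * (blkA M)ᵀ - (((blkA M) * Z + (blkB M)) * ((blkC M) * Z + (blkD M))⁻¹) := by
      rw [mul_assoc (((blkA M) * Z + (blkB M)) * ((blkC M) * Z + (blkD M))⁻¹) (blkC M) _, hq3]
      have h1 : (blkC M) * Z * (blkA M)ᵀ + ((blkD M) * (blkA M)ᵀ - 1) = ((blkC M) * Z + (blkD M)) * (blkA M)ᵀ - 1 := by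
        rw [add_mul]; abel
      rw [h1, mul_sub, ← mul_assoc, hWP, mul_one, add_mul]
    have hkey : (Matrix.vecMul (fun i => ((α i) : ℂ)) (((blkA M) * Z + (blkB M)) * ((blkC M) * Z + (blkD M))⁻¹) ⬝ᵥ (fun i => ((α i) : ℂ)) + (fun i => ((β i) : ℂ)) ⬝ᵥ (fun i => ((α i) : ℂ)))
        + Matrix.vecMul (Matrix.vecMul (fun i => ((α i) : ℂ)) ((blkA M) * Z + (blkB M)) + Matrix.vecMul (fun i => ((β i) : ℂ)) ((blkC M) * Z + (blkD M))) (((blkC M) * Z + (blkD M))⁻¹ * (blkC M)) ⬝ᵥ (Matrix.vecMul (fun i => ((α i) : ℂ)) ((blkA M) * Z + (blkB M)) + Matrix.vecMul (fun i => ((β i) : ℂ)) ((blkC M) * Z + (blkD M)))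
        = (Matrix.vecMul (Matrix.vecMul (fun i => ((α i) : ℂ)) (blkA M) + Matrix.vecMul (fun i => ((β i) : ℂ)) (blkC M)) Z ⬝ᵥ (Matrix.vecMul (fun i => ((α i) : ℂ)) (blkA M) + Matrix.vecMul (fun i => ((β i) : ℂ)) (blkC M)) + (Matrix.vecMul (fun i => ((α i) : ℂ)) (blkB M) + Matrix.vecMul (fun i => ((β i) : ℂ)) (blkD M)) ⬝ᵥ (Matrix.vecMul (fun i => ((α i) : ℂ)) (blkA M) + Matrix.vecMul (fun i => ((β i) : ℂ)) (blkC M))) := by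
      have hs1 : Matrix.vecMul (Matrix.vecMul (fun i => ((α i) : ℂ)) ((blkA M) * Z + (blkB M)) + Matrix.vecMul (fun i => ((β i) : ℂ)) ((blkC M) * Z + (blkD M))) (((blkC M) * Z + (blkD M))⁻¹ * (blkC M))
          = Matrix.vecMul (Matrix.vecMul (fun i => ((α i) : ℂ)) (((blkA M) * Z + (blkB M)) * ((blkC M) * Z + (blkD M))⁻¹) + (fun i => ((β i) : ℂ))) (blkC M) := by
        rw [← Matrix.vecMul_vecMul, hyP]
      rw [hs1]
      simp only [Matrix.add_vecMul, Matrix.vecMul_vecMul, dotProduct_add,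
        add_dotProduct, JacAux.dot_vecMul_vecMul]
      rw [hq1, hq2, hq3, hq4]
      simp only [Matrix.vecMul_add, Matrix.vecMul_sub, add_dotProduct,
        sub_dotProduct, Matrix.vecMul_one]
      ring
    exact JacAux.final_algebra hdkne (JacAux.exp_helper hkey)

end
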